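/- Let X be a path-connected metric space, p ∈ X, let E be the quotient of the path space S_p(X) = {continuous f : [0,1] → X with f(0) = p} (with the uniform topology) by path homotopy rel endpoints, and let Q : E → X be the endpoint map Q([f]) = f(1). Then the fiber Q⁻¹(p) is canonically homeomorphic to the topological fundamental group π₁(X,p); moreover, for any x ∈ X and any path α from p to x, concatenation with α gives a homeomorphism from π₁(X,p) onto the fiber Q⁻¹(x). -/

import Mathlib

/-!
Both `π₁(X,p)` and the fibre `Q⁻¹(x)` are quotients of path spaces. For `π₁` this is the loop
space modulo path components, and a path in a space of paths from `p` to `x` is the same as a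
homotopy rel endpoints. Since points of `X` are closed, `Q⁻¹(x)` is closed in `E`, so it carries
the quotient topology of the paths from `p` to `x` modulo homotopy rel endpoints.
Concatenation `γ ↦ γ · α` is continuous, has the continuous homotopy inverse `f ↦ f · α⁻¹`, and
`γ · α ≃ γ' · α` iff `γ ≃ γ'`. Hence `γ ↦ [γ · α]` is a quotient map onto `Q⁻¹(x)` whose fibres
are exactly the path components of the loop space.
-/

open Set Topology unitInterval

noncomputable section

/-- The loop space `C_p(X)`: continuous maps `f : [0,1] → X` with `f 0 = f 1 = p`,
with the topology of uniform convergence (the compact-open topology on `C(I,X)`,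
which agrees with uniform convergence for metric `X`). -/
def LoopSp (X : Type) [TopologicalSpace X] (p : X) : Type :=
  {f : C(unitInterval, X) // f 0 = p ∧ f 1 = p}

instance (X : Type) [TopologicalSpace X] (p : X) : TopologicalSpace (LoopSp X p) :=
  inferInstanceAs (TopologicalSpace {f : C(unitInterval, X) // f 0 = p ∧ f 1 = p})

/-- The topological fundamental group `π₁(X,p)`: the set of path components of the
loop space `C_p(X)`, with the quotient topology. -/
def TopPi1 (X : Type) [TopologicalSpace X] (p : X) : Type :=
  @Quotient (LoopSp X p) (pathSetoid _)

instance (X : Type) [TopologicalSpace X] (p : X) : TopologicalSpace (TopPi1 X p) :=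
  inferInstanceAs (TopologicalSpace (@Quotient (LoopSp X p) (pathSetoid _)))

/-- The class in `π₁(X,p)` of a loop. -/
def TopPi1.mk {X : Type} [TopologicalSpace X] {p : X} (f : LoopSp X p) : TopPi1 X p :=
  @Quotient.mk _ (pathSetoid _) f

/-- A continuous map sending `p` to `q` induces a map on loops. -/
def LoopSp.map {X Y : Type} [TopologicalSpace X] [TopologicalSpace Y] {p : X} {q : Y}
    (f : C(X, Y)) (hf : f p = q) : LoopSp X p → LoopSp Y q :=
  fun α => ⟨f.comp α.1, by simp [α.2.1, α.2.2, hf]⟩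

lemma LoopSp.continuous_map {X Y : Type} [TopologicalSpace X] [TopologicalSpace Y]
    {p : X} {q : Y} (f : C(X, Y)) (hf : f p = q) :
    Continuous (LoopSp.map f hf) :=
  Continuous.subtype_mk ((ContinuousMap.continuous_postcomp f).comp continuous_subtype_val) _

/-- The homomorphism `f_* : π₁(X,p) → π₁(Y,q)` induced by a continuous map `f` with
`f p = q`, namely `f_*[α] = [f ∘ α]`. -/
def TopPi1.map {X Y : Type} [TopologicalSpace X] [TopologicalSpace Y] {p : X} {q : Y}
    (f : C(X, Y)) (hf : f p = q) : TopPi1 X p → TopPi1 Y q :=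
  @Quotient.map _ _ (pathSetoid _) (pathSetoid _) (LoopSp.map f hf)
    (fun _ _ h => ⟨h.somePath.map (LoopSp.continuous_map f hf)⟩)

/-- A space is totally path disconnected if each of its path components is a single point. -/
def IsTotallyPathDisconnected (Y : Type) [TopologicalSpace Y] : Prop :=
  ∀ x y : Y, Joined x y → x = y

/-- A continuous surjection is a (Hurewicz) fibration if it has the homotopy lifting
property with respect to all spaces. -/
def IsFibration {E B : Type} [TopologicalSpace E] [TopologicalSpace B] (q : E → B) : Prop :=
  Function.Surjective q ∧ Continuous q ∧
    ∀ (Y : Type) [TopologicalSpace Y] (f : Y → E) (F : Y × unitInterval → B),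
      Continuous f → Continuous F → (∀ y, F (y, 0) = q (f y)) →
      ∃ G : Y × unitInterval → E, Continuous G ∧ (∀ z, q (G z) = F z) ∧
        ∀ y, G (y, 0) = f y

end

/-- The path space `S_p(X)`: continuous maps `f : [0,1] → X` with `f 0 = p`, with the
topology of uniform convergence. -/
def PathSp (X : Type) [TopologicalSpace X] (p : X) : Type :=
  {f : C(unitInterval, X) // f 0 = p}

instance (X : Type) [TopologicalSpace X] (p : X) : TopologicalSpace (PathSp X p) :=
  inferInstanceAs (TopologicalSpace {f : C(unitInterval, X) // f 0 = p})

/-- The equivalence relation of path homotopy (homotopy rel endpoints) on `S_p(X)`. -/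
def pathHomSetoid (X : Type) [TopologicalSpace X] (p : X) : Setoid (PathSp X p) where
  r f g := ContinuousMap.HomotopicRel f.1 g.1 {0, 1}
  iseqv := ⟨fun f => ContinuousMap.HomotopicRel.refl f.1, fun h => h.symm,
    fun h h' => h.trans h'⟩

/-- `E`: the quotient of the path space `S_p(X)` by path homotopy rel endpoints, with
the quotient topology. -/
def PathClasses (X : Type) [TopologicalSpace X] (p : X) : Type :=
  Quotient (pathHomSetoid X p)

instance (X : Type) [TopologicalSpace X] (p : X) : TopologicalSpace (PathClasses X p) :=
  inferInstanceAs (TopologicalSpace (Quotient (pathHomSetoid X p)))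

/-- The endpoint map `Q : E → X`, `Q([f]) = f(1)`. -/
def endMap (X : Type) [TopologicalSpace X] (p : X) : PathClasses X p → X :=
  Quotient.lift (fun f : PathSp X p => f.1 1)
    (fun _ _ h => h.some.fst_eq_snd (by simp : (1 : unitInterval) ∈ ({0, 1} : Set unitInterval)))

theorem Topology.IsQuotientMap.restrictPreimage_isClosed {A B : Type*} [TopologicalSpace A]
    [TopologicalSpace B] {f : A → B} (hf : IsQuotientMap f) {s : Set B} (hs : IsClosed s) :
    IsQuotientMap (s.restrictPreimage f) := by
  refine isQuotientMap_iff_isClosed.2 ⟨hf.surjective.restrictPreimage _, fun U ↦ ?_⟩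
  rw [hs.isClosedEmbedding_subtypeVal.isClosed_iff_image_isClosed, ← hf.isClosed_preimage,
    (hs.preimage hf.continuous).isClosedEmbedding_subtypeVal.isClosed_iff_image_isClosed,
    Set.image_val_preimage_restrictPreimage]

noncomputable def Topology.IsQuotientMap.homeomorphQuotient {A B : Type*} [TopologicalSpace A]
    [TopologicalSpace B] {s : Setoid A} {f : A → B} (hf : IsQuotientMap f)
    (hs : ∀ a b, s a b ↔ f a = f b) : Quotient s ≃ₜ B :=
  (Homeomorph.Quotient.congrRight hs).trans
    (IsQuotientMap.homeomorph (f := ⟨f, hf.continuous⟩) hf)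

theorem Path.joined_iff_homotopic {X : Type*} [TopologicalSpace X] {x y : X}
    {γ γ' : Path x y} : Joined γ γ' ↔ γ.Homotopic γ' := by
  constructor
  · rintro ⟨P⟩
    exact ⟨⟨⟨⟨fun q ↦ P q.1 q.2, continuous_eval.comp (P.continuous.prodMap continuous_id)⟩,
      fun t ↦ by simp, fun t ↦ by simp⟩, fun t s hs ↦ by rcases hs with rfl | rfl <;> simp⟩⟩
  · rintro ⟨F⟩
    exact ⟨⟨⟨F.eval, Path.continuous_uncurry_iff.mp F.continuous⟩, F.eval_zero, F.eval_one⟩⟩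

theorem Path.Homotopic.trans_right_cancel_iff {X : Type*} [TopologicalSpace X] {x y z : X}
    {γ γ' : Path x y} (α : Path y z) : (γ.trans α).Homotopic (γ'.trans α) ↔ γ.Homotopic γ' := by
  simp only [← Path.Homotopic.Quotient.eq, Path.Homotopic.Quotient.mk_trans]
  refine ⟨fun h ↦ ?_, fun h ↦ by rw [h]⟩
  simpa using congrArg (·.trans (Path.Homotopic.Quotient.mk α).symm) h

theorem Path.Homotopic.trans_symm_trans {X : Type*} [TopologicalSpace X] {x y z : X}
    (γ : Path x y) (α : Path z y) : ((γ.trans α.symm).trans α).Homotopic γ := by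
  simp [← Path.Homotopic.Quotient.eq, Path.Homotopic.Quotient.mk_trans,
    Path.Homotopic.Quotient.mk_symm]

def LoopSp.homeomorphPath (X : Type) [TopologicalSpace X] (p : X) : LoopSp X p ≃ₜ Path p p where
  toFun γ := ⟨γ.1, γ.2.1, γ.2.2⟩
  invFun γ := ⟨γ.toContinuousMap, γ.source, γ.target⟩
  continuous_toFun := continuous_induced_rng.mpr continuous_subtype_val
  continuous_invFun := continuous_induced_dom.subtype_mk _

theorem LoopSp.joined_iff_homotopic {X : Type} [TopologicalSpace X] {p : X}
    {γ γ' : LoopSp X p} :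
    Joined γ γ' ↔ (homeomorphPath X p γ).Homotopic (homeomorphPath X p γ') := by
  rw [← Path.joined_iff_homotopic]
  exact ⟨fun h ↦ h.map (homeomorphPath X p).continuous,
    fun h ↦ by simpa using h.map (homeomorphPath X p).symm.continuous⟩

theorem continuous_endMap {X : Type} [TopologicalSpace X] {p : X} :
    Continuous (endMap X p) :=
  continuous_quot_lift _ ((continuous_eval_const 1).comp continuous_subtype_val)

namespace PathClasses

variable {X : Type} [TopologicalSpace X] {p x : X}

def ofPath (f : Path p x) : endMap X p ⁻¹' {x} :=
  ⟨Quotient.mk _ ⟨f.toContinuousMap, f.source⟩, f.target⟩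

theorem ofPath_eq_ofPath_iff {f g : Path p x} : ofPath f = ofPath g ↔ f.Homotopic g :=
  Subtype.ext_iff.trans Quotient.eq

noncomputable def ofLoopTrans (α : Path p x) (γ : LoopSp X p) : endMap X p ⁻¹' {x} :=
  ofPath ((LoopSp.homeomorphPath X p γ).trans α)

theorem ofLoopTrans_eq_ofLoopTrans_iff (α : Path p x) {γ γ' : LoopSp X p} :
    ofLoopTrans α γ = ofLoopTrans α γ' ↔ Joined γ γ' := by
  rw [ofLoopTrans, ofLoopTrans, ofPath_eq_ofPath_iff, Path.Homotopic.trans_right_cancel_iff,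
    LoopSp.joined_iff_homotopic]

variable [T1Space X]

theorem isQuotientMap_ofPath : IsQuotientMap (ofPath (p := p) (x := x)) := by
  have hfib : IsQuotientMap ((endMap X p ⁻¹' {x}).restrictPreimage (Quotient.mk _)) :=
    isQuotientMap_quotient_mk'.restrictPreimage_isClosed
      (isClosed_singleton.preimage continuous_endMap)
  have hpath : IsQuotientMap fun f : Path p x ↦
      (⟨⟨f.toContinuousMap, f.source⟩, f.target⟩ : Quotient.mk _ ⁻¹' (endMap X p ⁻¹' {x})) :=
    IsQuotientMap.of_inverse
      (f := fun f : Quotient.mk _ ⁻¹' (endMap X p ⁻¹' {x}) ↦ (⟨f.1.1, f.1.2, f.2⟩ : Path p x))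
      (continuous_induced_rng.mpr (continuous_subtype_val.comp continuous_subtype_val))
      ((continuous_induced_dom.subtype_mk _).subtype_mk _) fun _ ↦ rfl
  exact hfib.comp hpath

theorem isQuotientMap_ofLoopTrans (α : Path p x) : IsQuotientMap (ofLoopTrans α) := by
  have hcont : Continuous (ofLoopTrans α) :=
    isQuotientMap_ofPath.continuous.comp
      (Path.continuous_trans.comp
        ((LoopSp.homeomorphPath X p).continuous.prodMk continuous_const))
  refine .of_comp (f := fun f : Path p x ↦ (LoopSp.homeomorphPath X p).symm (f.trans α.symm))
    ((LoopSp.homeomorphPath X p).symm.continuous.comp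
      (Path.continuous_trans.comp (continuous_id.prodMk continuous_const))) hcont ?_
  convert isQuotientMap_ofPath (p := p) (x := x) using 1
  funext f
  simpa [ofLoopTrans] using ofPath_eq_ofPath_iff.mpr (Path.Homotopic.trans_symm_trans f α)

end PathClasses

noncomputable def TopPi1.homeomorphFiber {X : Type} [TopologicalSpace X] [T1Space X] {p x : X}
    (α : Path p x) : TopPi1 X p ≃ₜ endMap X p ⁻¹' {x} :=
  (PathClasses.isQuotientMap_ofLoopTrans α).homeomorphQuotient fun _ _ ↦
    (PathClasses.ofLoopTrans_eq_ofLoopTrans_iff α).symm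

theorem stmt10_general (X : Type) [MetricSpace X] (p : X) :
    (∃ h : TopPi1 X p ≃ₜ ↥(endMap X p ⁻¹' {p}),
        ∀ γ : LoopSp X p,
          (h (TopPi1.mk γ)).1 =
            Quotient.mk (pathHomSetoid X p) ⟨γ.1, γ.2.1⟩) ∧
      ∀ (x : X) (α : Path p x),
        ∃ h : TopPi1 X p ≃ₜ ↥(endMap X p ⁻¹' {x}),
          ∀ γ : LoopSp X p,
            (h (TopPi1.mk γ)).1 =
              Quotient.mk (pathHomSetoid X p)
                ⟨((Path.mk γ.1 γ.2.1 γ.2.2).trans α).toContinuousMap,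
                  ((Path.mk γ.1 γ.2.1 γ.2.2).trans α).source'⟩ := by
  refine ⟨⟨TopPi1.homeomorphFiber (Path.refl p), fun γ ↦ ?_⟩,
    fun x α ↦ ⟨TopPi1.homeomorphFiber α, fun γ ↦ rfl⟩⟩
  exact congrArg Subtype.val
    (PathClasses.ofPath_eq_ofPath_iff.mpr (Path.Homotopic.trans_refl _))

/-- For a path-connected metric space `X` with `p ∈ X`, the fibre `Q⁻¹(p)` of the
endpoint fibration `Q : E → X` is canonically homeomorphic to the topological
fundamental group `π₁(X,p)` (via `[γ] ↦ [γ]`), and for any `x ∈ X` and any path `α`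
from `p` to `x`, concatenation with `α` gives a homeomorphism of `π₁(X,p)` onto the
fibre `Q⁻¹(x)`. -/
theorem stmt10 (X : Type) [MetricSpace X] [PathConnectedSpace X] (p : X) :
    (∃ h : TopPi1 X p ≃ₜ ↥(endMap X p ⁻¹' {p}),
        ∀ γ : LoopSp X p,
          (h (TopPi1.mk γ)).1 =
            Quotient.mk (pathHomSetoid X p) ⟨γ.1, γ.2.1⟩) ∧
      ∀ (x : X) (α : Path p x),
        ∃ h : TopPi1 X p ≃ₜ ↥(endMap X p ⁻¹' {x}),
          ∀ γ : LoopSp X p,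
            (h (TopPi1.mk γ)).1 =
              Quotient.mk (pathHomSetoid X p)
                ⟨((Path.mk γ.1 γ.2.1 γ.2.2).trans α).toContinuousMap,
                  ((Path.mk γ.1 γ.2.1 γ.2.2).trans α).source'⟩ :=
  stmt10_general X p
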